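/- arXiv:2602.05409 — 3 statements merged into one kernel-verified Lean document; each statement's English description precedes it below -/
import Mathlib

section
/- Let d be an integer and let t_2, t_3, t_4, t_5 be nonnegative integers satisfying: (i) d(d−1) = 2t_2 + 6t_3 + 12t_4 + 20t_5; (ii) t_2 ≥ 3 + t_4 + 2t_5; (iii) 4(t_2 + 2t_3 + 3t_4 + 4t_5) ≤ d² + 2d − 3; (iv) 2(t_2 + t_3) ≤ 3(d−1) + 4t_5. Then 24·t_5 ≥ (d−3)(d−19). -/
/-- **Lower bound on `t₅` (arithmetic form).**  Nonnegative integers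
`t₂, t₃, t₄, t₅` satisfying the pair-counting identity, Melchior's inequality and
the two discriminant inequalities force `24·t₅ ≥ (d−3)(d−19)`. -/
theorem t5_lower_bound_arith (d : ℤ)
    (t2 t3 t4 t5 : ℤ) (h2 : 0 ≤ t2) (h3 : 0 ≤ t3) (h4 : 0 ≤ t4) (h5 : 0 ≤ t5)
    (hcount : d * (d - 1) = 2 * t2 + 6 * t3 + 12 * t4 + 20 * t5)
    (hmel : t2 ≥ 3 + t4 + 2 * t5)
    (hdisc1 : 4 * (t2 + 2 * t3 + 3 * t4 + 4 * t5) ≤ d ^ 2 + 2 * d - 3)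
    (hdisc2 : 2 * (t2 + t3) ≤ 3 * (d - 1) + 4 * t5) :
    24 * t5 ≥ (d - 3) * (d - 19) := by
  nlinarith [sq_nonneg d, sq_nonneg (d-1)]
end

section
/- Let d and h be integers and let t_2, t_3, t_4 be nonnegative integers satisfying: (i) d(d−1) = 2t_2 + 6t_3 + 12t_4; (ii) t_2 ≥ 3 + t_4; (iii) 2(t_2 + t_3) ≤ 3(d−1) + 4h. Then d² − 22d + 57 ≤ 28h. -/
/-- **Quadratic inequality in the plus-one generated case (arithmetic form).**
The pair-counting identity, Melchior's inequality and the discriminant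
inequality force `d² − 22d + 57 ≤ 28h`. -/
theorem pog_quadratic_inequality (d h : ℤ)
    (t2 t3 t4 : ℤ) (h2 : 0 ≤ t2) (h3 : 0 ≤ t3) (h4 : 0 ≤ t4)
    (hcount : d * (d - 1) = 2 * t2 + 6 * t3 + 12 * t4)
    (hmel : t2 ≥ 3 + t4)
    (hdisc : 2 * (t2 + t3) ≤ 3 * (d - 1) + 4 * h) :
    d ^ 2 - 22 * d + 57 ≤ 28 * h := by
  nlinarith [h3, hmel, hdisc, hcount]
end

section
/- (Melchior's inequality) Let L be an arrangement of d ≥ 3 lines in the real projective plane with t_d(L) = 0 (i.e. the lines are not all concurrent). Then t_2(L) ≥ 3 + Σ_{r=4}^{d−1} (r − 3)·t_r(L). -/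
/-- A line of the real projective plane `ℙ²(ℝ)`, viewed as a 2-dimensional
linear subspace of `ℝ³`. -/
def IsProjLine (ℓ : Submodule ℝ (Fin 3 → ℝ)) : Prop :=
  Module.finrank ℝ ℓ = 2

/-- A point of the real projective plane `ℙ²(ℝ)`, viewed as a 1-dimensional
linear subspace of `ℝ³`.  A point `p` lies on a line `ℓ` if `p ≤ ℓ`. -/
def IsProjPoint (p : Submodule ℝ (Fin 3 → ℝ)) : Prop :=
  Module.finrank ℝ p = 1

/-- The multiplicity of `p`: the number of lines of the arrangement `L`
passing through `p`. -/
noncomputable def multPt (L : Finset (Submodule ℝ (Fin 3 → ℝ)))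
    (p : Submodule ℝ (Fin 3 → ℝ)) : ℕ :=
  {ℓ : Submodule ℝ (Fin 3 → ℝ) | ℓ ∈ L ∧ p ≤ ℓ}.ncard

/-- `tr L r`: the number of points of `ℙ²(ℝ)` lying on exactly `r` lines
of the arrangement `L`. -/
noncomputable def tr (L : Finset (Submodule ℝ (Fin 3 → ℝ))) (r : ℕ) : ℕ :=
  {p : Submodule ℝ (Fin 3 → ℝ) | IsProjPoint p ∧ multPt L p = r}.ncard

/-!
Choose for each line a linear form cutting it out. The lines cut `ℝ³` into open cones, the
chambers, which we record by their sign vectors. Deletion–restriction (adding a hyperplane `ker g`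
to an arrangement inside `U` adds one cell for each cell of the arrangement inside `U ⊓ ker g`)
gives, by induction on the lines, Euler's formula `#chambers = 2 + 2 ∑ₚ (mₚ - 1)`, the sum running
over the intersection points `p` of multiplicity `mₚ`; it also shows that a line through `k`
intersection points is a wall of exactly `4k` chambers. If the lines are not concurrent, every
chamber has at least three walls: otherwise some `v ≠ 0` lies on all of them, and walking from a
generic point of the chamber in direction `v`, the first line met is a wall not containing `v`.
Hence `3 (2 + 2 ∑ₚ (mₚ - 1)) ≤ 4 ∑ₚ mₚ`, that is `3 + ∑ₚ (mₚ - 3) ≤ 0`, which is Melchior's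
inequality.
-/

open Finset Module Filter Topology
open LinearMap (ker)
open scoped Classical

noncomputable section

lemma mul_sub_pos_of_abs_le {a b : ℝ} (hab : |a| ≤ |b|) (hne : a ≠ b) (hb : b ≠ 0) :
    0 < b * (b - a) := by
  have : a * b ≤ b * b :=
    calc a * b ≤ |a| * |b| := (le_abs_self _).trans (abs_mul a b).le
      _ ≤ |b| * |b| := by gcongr
      _ = b * b := abs_mul_abs_self b
  exact lt_of_le_of_ne (by nlinarith) (mul_ne_zero hb (sub_ne_zero.2 hne.symm)).symm

section LinearForms

variable {E ι : Type*} [AddCommGroup E] [Module ℝ E]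

lemma finrank_inf_ker_add_one [FiniteDimensional ℝ E] {U : Submodule ℝ E} {φ : Module.Dual ℝ E}
    (hU : ¬U ≤ ker φ) : finrank ℝ ↥(U ⊓ ker φ) + 1 = finrank ℝ U := by
  have hφ : φ.domRestrict U ≠ 0 := fun h =>
    hU fun x hx => by simpa using LinearMap.congr_fun h ⟨x, hx⟩
  rw [← Module.Dual.finrank_ker_add_one_of_ne_zero hφ, LinearMap.ker_domRestrict,
    ← Submodule.finrank_map_subtype_eq, Submodule.map_comap_subtype]

lemma exists_ne_zero_forall_apply_eq_zero [FiniteDimensional ℝ E] (f : ι → Module.Dual ℝ E)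
    {W : Finset ι} (hW : #W < finrank ℝ E) : ∃ v ≠ 0, ∀ i ∈ W, f i v = 0 := by
  let φ : E →ₗ[ℝ] W → ℝ := LinearMap.pi fun i => f i
  have : ker φ ≠ ⊥ := LinearMap.ker_ne_bot_of_finrank_lt (by simpa using hW)
  obtain ⟨v, hv, hv0⟩ := Submodule.exists_mem_ne_zero_of_ne_bot this
  exact ⟨v, hv0, fun i hi => congr_fun (LinearMap.mem_ker.1 hv) ⟨i, hi⟩⟩

lemma inf_ker_sup_span_ne_top {φ ψ : Module.Dual ℝ E} {v : E} (hφ : φ v ≠ 0) (hψ : ψ v ≠ 0)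
    (hker : ker φ ≠ ker ψ) : ker φ ⊓ ker ψ ⊔ ℝ ∙ v ≠ ⊤ := by
  have hle : ker φ ⊓ ker ψ ⊔ ℝ ∙ v ≤ ker (ψ v • φ - φ v • ψ) := by
    refine sup_le (fun x hx => ?_) ((Submodule.span_singleton_le_iff_mem _ _).2 ?_)
    · obtain ⟨hφx, hψx⟩ := Submodule.mem_inf.1 hx
      simp_all
    · simp [mul_comm]
  intro htop
  have hprop : ∀ x, ψ v * φ x = φ v * ψ x := fun x => by
    simpa [sub_eq_zero] using hle (htop ▸ Submodule.mem_top : x ∈ _)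
  refine hker (Submodule.ext fun x => ?_)
  simp only [LinearMap.mem_ker]
  constructor <;> intro h <;> have := hprop x <;> rw [h, mul_zero] at this
  · exact (mul_eq_zero.1 this.symm).resolve_left hφ
  · exact (mul_eq_zero.1 this).resolve_left hψ

end LinearForms

namespace HyperplaneArrangement

variable {E ι : Type*} [AddCommGroup E] [Module ℝ E] [DecidableEq ι] (f : ι → Module.Dual ℝ E)

def OnSide (S : Finset ι) (i : ι) (x : E) : Prop :=
  if i ∈ S then 0 < f i x else f i x < 0

/-- The cells of the arrangement `{ker (f i) | i ∈ M}` inside `U`, each recorded by the set `S`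
of forms that are positive on it. -/
def cells (U : Submodule ℝ E) (M : Finset ι) : Finset (Finset ι) :=
  {S ∈ M.powerset | ∃ x ∈ U, ∀ i ∈ M, OnSide f S i x}

def IsWall (M S : Finset ι) (i : ι) : Prop :=
  ∃ z, f i z = 0 ∧ ∀ j ∈ M.erase i, OnSide f S j z

variable {f} {U : Submodule ℝ E} {M S T : Finset ι} {g i : ι} {x y : E}

lemma onSide_congr (h : i ∈ S ↔ i ∈ T) : OnSide f S i x ↔ OnSide f T i x := by
  simp only [OnSide, h]

lemma OnSide.ne_zero (h : OnSide f S i x) : f i x ≠ 0 := by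
  unfold OnSide at h
  split_ifs at h <;> [exact h.ne'; exact h.ne]

lemma OnSide.of_mul_pos (hx : OnSide f S i x) (hxy : 0 < f i y * f i x) : OnSide f S i y := by
  unfold OnSide at *
  split_ifs at * <;> nlinarith

lemma OnSide.add_smul_sub {t : ℝ} (hx : OnSide f S i x) (hy : OnSide f S i y) (ht₀ : 0 ≤ t)
    (ht₁ : t ≤ 1) : OnSide f S i (x + t • (y - x)) := by
  unfold OnSide at *
  simp only [map_add, map_smul, map_sub, smul_eq_mul]
  split_ifs at *
  · nlinarith [mul_nonneg ht₀ hy.le, mul_nonneg (sub_nonneg.2 ht₁) hx.le, mul_pos hx hy]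
  · nlinarith [mul_nonneg ht₀ (neg_nonneg.2 hy.le),
      mul_nonneg (sub_nonneg.2 ht₁) (neg_nonneg.2 hx.le), mul_pos (neg_pos.2 hx) (neg_pos.2 hy)]

lemma eventually_onSide (hx : ∀ i ∈ M, OnSide f S i x) (u : E) :
    ∀ᶠ t in 𝓝 (0 : ℝ), ∀ i ∈ M, OnSide f S i (x + t • u) := by
  refine (eventually_all_finset M).2 fun i hi => ?_
  have hlim : Tendsto (fun t : ℝ => f i (x + t • u)) (𝓝 0) (𝓝 (f i x)) := by
    simp only [map_add, map_smul, smul_eq_mul]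
    exact Continuous.tendsto' (by fun_prop) _ _ (by simp)
  have h := hx i hi
  unfold OnSide at h ⊢
  split_ifs at h ⊢
  · exact hlim.eventually (lt_mem_nhds h)
  · exact hlim.eventually (gt_mem_nhds h)

lemma exists_pos_onSide (hx : ∀ i ∈ M, OnSide f S i x) (u : E) :
    ∃ t : ℝ, 0 < t ∧ ∀ i ∈ M, OnSide f S i (x + t • u) := by
  obtain ⟨t, ht, ht₀⟩ := ((eventually_onSide hx u).filter_mono nhdsWithin_le_nhds |>.and
    (self_mem_nhdsWithin : Set.Ioi (0 : ℝ) ∈ 𝓝[>] 0)).exists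
  exact ⟨t, ht₀, ht⟩

lemma exists_onSide_forall_notMem {Q : Finset (Submodule ℝ E)} (hQ : ⊤ ∉ Q)
    (hx : ∀ i ∈ M, OnSide f S i x) : ∃ y, (∀ i ∈ M, OnSide f S i y) ∧ ∀ q ∈ Q, y ∉ q := by
  obtain ⟨u, hu⟩ : ∃ u, ∀ q ∈ Q, u ∉ q := by
    by_contra! h
    exact Subspace.biUnion_ne_univ_of_top_notMem hQ
      (Set.eq_univ_of_forall fun u => by simpa using h u)
  have hbad : (⋃ q ∈ Q, {t : ℝ | x + t • u ∈ q}).Finite := by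
    refine Q.finite_toSet.biUnion fun q hq => Set.Subsingleton.finite fun s hs t ht => ?_
    by_contra hst
    have : (s - t) • u ∈ q := by simpa [sub_smul] using q.sub_mem hs ht
    exact hu q hq ((q.smul_mem_iff (sub_ne_zero.2 hst)).1 this)
  obtain ⟨t, ht, htQ⟩ := ((eventually_onSide hx u).filter_mono nhdsWithin_le_nhds |>.and
    (hbad.eventually_cofinite_notMem.filter_mono (nhdsNE_le_cofinite 0))).exists
  exact ⟨x + t • u, ht, fun q hq hmem => htQ (Set.mem_biUnion hq hmem)⟩

lemma mem_cells : S ∈ cells f U M ↔ S ⊆ M ∧ ∃ x ∈ U, ∀ i ∈ M, OnSide f S i x := by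
  rw [cells, mem_filter, mem_powerset]

lemma cells_mono {V : Submodule ℝ E} (hUV : U ≤ V) : cells f U M ⊆ cells f V M := fun _ hS =>
  have ⟨hSM, x, hx, hxS⟩ := mem_cells.1 hS
  mem_cells.2 ⟨hSM, x, hUV hx, hxS⟩

lemma cells_empty : cells f U ∅ = {∅} := by
  ext S
  rw [mem_cells, mem_singleton, subset_empty]
  exact ⟨And.left, fun h => ⟨h, 0, U.zero_mem, by simp⟩⟩

lemma cells_eq_empty_of_le_ker (hi : i ∈ M) (hU : U ≤ ker (f i)) : cells f U M = ∅ := by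
  refine eq_empty_of_forall_notMem fun S hS => ?_
  obtain ⟨-, x, hx, hxS⟩ := mem_cells.1 hS
  exact (hxS i hi).ne_zero (hU hx)

section Insert

variable (hg : g ∉ M)
include hg

lemma erase_mem_cells (hS : S ∈ cells f U (insert g M)) : S.erase g ∈ cells f U M := by
  obtain ⟨hSM, x, hx, hxS⟩ := mem_cells.1 hS
  refine mem_cells.2 ⟨fun j hj => ?_, x, hx, fun j hj => ?_⟩
  · exact (mem_insert.1 (hSM (mem_of_mem_erase hj))).resolve_left (ne_of_mem_erase hj)
  · have hjg : j ≠ g := fun h => hg (h ▸ hj)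
    exact (onSide_congr (by simp [hjg])).1 (hxS j (mem_insert_of_mem hj))

lemma mem_cells_insert_iff (hS : S ⊆ M) :
    S ∈ cells f U (insert g M) ↔ ∃ x ∈ U, (∀ i ∈ M, OnSide f S i x) ∧ f g x < 0 := by
  have hgS : g ∉ S := fun h => hg (hS h)
  simp only [mem_cells, forall_mem_insert, OnSide, if_neg hgS]
  exact ⟨fun ⟨_, x, hx, hgx, hxM⟩ => ⟨x, hx, hxM, hgx⟩,
    fun ⟨x, hx, hxM, hgx⟩ => ⟨hS.trans (subset_insert _ _), x, hx, hgx, hxM⟩⟩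

lemma insert_mem_cells_insert_iff (hS : S ⊆ M) :
    insert g S ∈ cells f U (insert g M) ↔ ∃ x ∈ U, (∀ i ∈ M, OnSide f S i x) ∧ 0 < f g x := by
  have hM : ∀ x, (∀ i ∈ M, OnSide f (insert g S) i x) ↔ ∀ i ∈ M, OnSide f S i x :=
    fun x => forall₂_congr fun i hi => onSide_congr (by simp [ne_of_mem_of_not_mem hi hg])
  simp only [mem_cells, forall_mem_insert, hM]
  simp only [OnSide, if_pos (mem_insert_self g S)]
  exact ⟨fun ⟨_, x, hx, hgx, hxM⟩ => ⟨x, hx, hxM, hgx⟩,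
    fun ⟨x, hx, hxM, hgx⟩ => ⟨insert_subset_insert _ hS, x, hx, hgx, hxM⟩⟩

lemma mem_cells_inf_ker_iff (hgU : ¬U ≤ ker (f g)) (hS : S ⊆ M) :
    S ∈ cells f (U ⊓ ker (f g)) M ↔
      S ∈ cells f U (insert g M) ∧ insert g S ∈ cells f U (insert g M) := by
  rw [mem_cells_insert_iff hg hS, insert_mem_cells_insert_iff hg hS, mem_cells]
  constructor
  · rintro ⟨-, z, hz, hzS⟩
    rw [Submodule.mem_inf, LinearMap.mem_ker] at hz
    obtain ⟨w, hwU, hw⟩ : ∃ w ∈ U, 0 < f g w := by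
      obtain ⟨w, hwU, hw⟩ := SetLike.not_le_iff_exists.1 hgU
      rcases Ne.lt_or_gt (show f g w ≠ 0 from hw) with h | h
      exacts [⟨-w, U.neg_mem hwU, by simpa using h⟩, ⟨w, hwU, h⟩]
    obtain ⟨t, ht, hzt⟩ := exists_pos_onSide hzS w
    obtain ⟨s, hs, hzs⟩ := exists_pos_onSide hzS (-w)
    refine ⟨⟨z + s • -w, U.add_mem hz.1 (U.smul_mem _ (U.neg_mem hwU)), hzs, ?_⟩,
      ⟨z + t • w, U.add_mem hz.1 (U.smul_mem _ hwU), hzt, ?_⟩⟩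
    · simp only [map_add, map_smul, map_neg, hz.2, smul_eq_mul]
      nlinarith
    · simp only [map_add, map_smul, hz.2, smul_eq_mul]
      positivity
  · rintro ⟨⟨y, hyU, hyS, hy⟩, ⟨x, hxU, hxS, hx⟩⟩
    set t := f g x / (f g x - f g y)
    have ht : 0 < t ∧ t < 1 :=
      ⟨div_pos hx (by linarith), (div_lt_one (by linarith)).2 (by linarith)⟩
    have hxyU : x + t • (y - x) ∈ U := U.add_mem hxU (U.smul_mem _ (U.sub_mem hyU hxU))
    refine ⟨hS, x + t • (y - x), Submodule.mem_inf.2 ⟨hxyU, ?_⟩,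
      fun i hi => (hxS i hi).add_smul_sub (hyS i hi) ht.1.le ht.2.le⟩
    rw [LinearMap.mem_ker, map_add, map_smul, map_sub, smul_eq_mul]
    simp only [t]
    field_simp [show f g x - f g y ≠ 0 by linarith]
    ring

lemma mem_or_insert_mem_cells_insert (hgU : ¬U ≤ ker (f g)) (hS : S ∈ cells f U M) :
    S ∈ cells f U (insert g M) ∨ insert g S ∈ cells f U (insert g M) := by
  obtain ⟨hSM, x, hx, hxS⟩ := mem_cells.1 hS
  rcases lt_trichotomy (f g x) 0 with h | h | h
  · exact .inl ((mem_cells_insert_iff hg hSM).2 ⟨x, hx, hxS, h⟩)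
  · exact .inl ((mem_cells_inf_ker_iff hg hgU hSM).1
      (mem_cells.2 ⟨hSM, x, Submodule.mem_inf.2 ⟨hx, h⟩, hxS⟩)).1
  · exact .inr ((insert_mem_cells_insert_iff hg hSM).2 ⟨x, hx, hxS, h⟩)

theorem card_cells_insert (hgU : ¬U ≤ ker (f g)) :
    #(cells f U (insert g M)) = #(cells f U M) + #(cells f (U ⊓ ker (f g)) M) := by
  rw [card_eq_sum_card_fiberwise fun S => erase_mem_cells hg]
  have hfiber : ∀ S ∈ cells f U M, #{T ∈ cells f U (insert g M) | T.erase g = S} =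
      1 + if S ∈ cells f (U ⊓ ker (f g)) M then 1 else 0 := by
    intro S hS
    have hSM := (mem_cells.1 hS).1
    have hgS : g ∉ S := fun h => hg (hSM h)
    have hfiber_eq : {T ∈ cells f U (insert g M) | T.erase g = S} =
        {T ∈ ({S, insert g S} : Finset (Finset ι)) | T ∈ cells f U (insert g M)} := by
      ext T
      simp only [mem_filter, mem_insert, mem_singleton]
      constructor
      · rintro ⟨hT, rfl⟩
        refine ⟨?_, hT⟩
        by_cases hgT : g ∈ T
        exacts [.inr (insert_erase hgT).symm, .inl (erase_eq_of_notMem hgT).symm]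
      · rintro ⟨rfl | rfl, hT⟩
        exacts [⟨hT, erase_eq_of_notMem hgS⟩, ⟨hT, erase_insert hgS⟩]
    have hone := mem_or_insert_mem_cells_insert hg hgU hS
    rw [hfiber_eq, filter_insert, filter_singleton]
    simp only [mem_cells_inf_ker_iff hg hgU hSM]
    by_cases hA : S ∈ cells f U (insert g M) <;>
      by_cases hB : insert g S ∈ cells f U (insert g M) <;>
      simp [hA, hB, ne_insert_of_notMem _ _ hgS] at hone ⊢
  rw [sum_congr rfl hfiber, sum_add_distrib, sum_boole, card_eq_sum_ones, filter_mem_eq_inter,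
    inter_eq_right.2 (cells_mono inf_le_left)]
  simp

end Insert

section Counting

variable [FiniteDimensional ℝ E]

theorem card_cells_of_finrank_eq_one (hU : finrank ℝ U = 1) (hM : M.Nonempty)
    (hUM : ∀ i ∈ M, ¬U ≤ ker (f i)) : #(cells f U M) = 2 := by
  induction hM using Finset.Nonempty.cons_induction with
  | singleton g =>
    rw [← insert_empty_eq, card_cells_insert (notMem_empty g) (hUM g (mem_singleton_self g)),
      cells_empty, cells_empty, card_singleton]
  | cons g M hg hM ih =>
    have hgU := hUM g (mem_cons_self g M)
    have hbot : U ⊓ ker (f g) = ⊥ := by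
      rw [← Submodule.finrank_eq_zero]
      have := finrank_inf_ker_add_one hgU
      omega
    obtain ⟨i, hi⟩ := hM
    rw [cons_eq_insert, card_cells_insert hg hgU, ih fun j hj => hUM j (mem_cons_of_mem hj), hbot,
      cells_eq_empty_of_le_ker hi bot_le, card_empty]

theorem card_cells_of_finrank_eq_two (hU : finrank ℝ U = 2) (hM : M.Nonempty)
    (hUM : ∀ i ∈ M, ¬U ≤ ker (f i)) :
    #(cells f U M) = 2 * #(M.image fun i => U ⊓ ker (f i)) := by
  induction hM using Finset.Nonempty.cons_induction with
  | singleton g =>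
    rw [← insert_empty_eq, card_cells_insert (notMem_empty g) (hUM g (mem_singleton_self g)),
      cells_empty, cells_empty, insert_empty_eq, image_singleton, card_singleton, card_singleton]
  | cons g M hg hM ih =>
    have hUM' : ∀ i ∈ M, ¬U ≤ ker (f i) := fun i hi => hUM i (mem_cons_of_mem hi)
    have hrank : ∀ i ∈ cons g M hg, finrank ℝ ↥(U ⊓ ker (f i)) = 1 := fun i hi => by
      have := finrank_inf_ker_add_one (hUM i hi)
      omega
    rw [cons_eq_insert, card_cells_insert hg (hUM g (mem_cons_self g M)), ih hUM', image_insert]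
    by_cases hold : U ⊓ ker (f g) ∈ M.image fun i => U ⊓ ker (f i)
    · obtain ⟨i, hi, hgi⟩ := mem_image.1 hold
      rw [insert_eq_of_mem hold, cells_eq_empty_of_le_ker hi (hgi ▸ inf_le_right), card_empty,
        add_zero]
    · rw [card_insert_of_notMem hold, card_cells_of_finrank_eq_one (hrank g (mem_cons_self g M)) hM]
      · ring
      intro i hi hle
      refine hold (mem_image.2 ⟨i, hi, (Submodule.eq_of_le_of_finrank_eq ?_ ?_).symm⟩)
      · exact le_inf inf_le_left hle
      · rw [hrank g (mem_cons_self g M), hrank i (mem_cons_of_mem hi)]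

end Counting

section Walls

lemma isWall_iff (hSM : S ⊆ M) :
    IsWall f M S g ↔ S.erase g ∈ cells f (ker (f g)) (M.erase g) := by
  have hside : ∀ j ∈ M.erase g, ∀ z, OnSide f (S.erase g) j z ↔ OnSide f S j z :=
    fun j hj z => onSide_congr (by simp [ne_of_mem_erase hj])
  rw [mem_cells]
  constructor
  · rintro ⟨z, hz, hzS⟩
    exact ⟨erase_subset_erase g hSM, z, hz, fun j hj => (hside j hj z).2 (hzS j hj)⟩
  · rintro ⟨-, z, hz, hzS⟩
    exact ⟨z, hz, fun j hj => (hside j hj z).1 (hzS j hj)⟩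

theorem card_filter_isWall (hg : g ∈ M) (hfg : f g ≠ 0) :
    #{S ∈ cells f ⊤ M | IsWall f M S g} = 2 * #(cells f (ker (f g)) (M.erase g)) := by
  have hg' : g ∉ M.erase g := notMem_erase g M
  have htop : ¬(⊤ : Submodule ℝ E) ≤ ker (f g) := fun h => hfg (LinearMap.ext fun x => h trivial)
  have hboth := fun T (hT : T ⊆ M.erase g) => mem_cells_inf_ker_iff hg' htop hT
  simp only [insert_erase hg, top_inf_eq] at hboth
  set C := cells f (ker (f g)) (M.erase g)
  have hgC : ∀ T ∈ C, g ∉ T := fun T hT h => hg' ((mem_cells.1 hT).1 h)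
  have : {S ∈ cells f ⊤ M | IsWall f M S g} = C ∪ C.image (insert g) := by
    ext S
    simp only [mem_filter, mem_union, mem_image]
    constructor
    · rintro ⟨hS, hw⟩
      have hC := (isWall_iff (mem_cells.1 hS).1).1 hw
      by_cases hgS : g ∈ S
      exacts [.inr ⟨_, hC, insert_erase hgS⟩, .inl (erase_eq_of_notMem hgS ▸ hC)]
    · rintro (hS | ⟨T, hT, rfl⟩)
      · have hSM := (mem_cells.1 hS).1
        refine ⟨((hboth S hSM).1 hS).1, (isWall_iff (hSM.trans (erase_subset g M))).2 ?_⟩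
        rwa [erase_eq_of_notMem (hgC S hS)]
      · have hTM := (mem_cells.1 hT).1
        refine ⟨((hboth T hTM).1 hT).2,
          (isWall_iff (insert_subset hg (hTM.trans (erase_subset g M)))).2 ?_⟩
        rwa [erase_insert (hgC T hT)]
  rw [this, card_union_of_disjoint, card_image_of_injOn, two_mul]
  · intro S hS T hT h
    rw [← erase_insert (hgC S hS), ← erase_insert (hgC T hT)]
    exact congrArg (·.erase g) h
  · refine disjoint_left.2 fun S hS hS' => ?_
    obtain ⟨T, -, rfl⟩ := mem_image.1 hS'
    exact hgC _ hS (mem_insert_self g T)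

/-- Walking from `x` along `v`, the first hyperplane met is a wall of the chamber of `x`; the
genericity hypothesis `hgen` rules out meeting two hyperplanes at once. -/
lemma isWall_of_forall_abs_div_le (hxS : ∀ i ∈ M, OnSide f S i x) {v : E}
    (hgv : f g v ≠ 0) (hmin : ∀ j ∈ M, f j v ≠ 0 → |f g x / f g v| ≤ |f j x / f j v|)
    (hgen : ∀ j ∈ M, j ≠ g → f j v ≠ 0 → x ∉ ker (f g) ⊓ ker (f j) ⊔ ℝ ∙ v) :
    IsWall f M S g := by
  set τ := f g x / f g v
  have hz : f g (x - τ • v) = 0 := by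
    simp only [map_sub, map_smul, smul_eq_mul, τ]
    field_simp
    ring
  refine ⟨x - τ • v, hz, fun j hj => ?_⟩
  obtain ⟨hjg, hjM⟩ := mem_erase.1 hj
  have hjx := (hxS j hjM).ne_zero
  refine (hxS j hjM).of_mul_pos ?_
  by_cases hjv : f j v = 0
  · simpa [hjv] using mul_self_pos.2 hjx
  have hτ : τ ≠ f j x / f j v := by
    intro h
    have hzj : f j (x - τ • v) = 0 := by
      simp only [map_sub, map_smul, smul_eq_mul, h]
      field_simp
      ring
    have hzgj : x - τ • v ∈ ker (f g) ⊓ ker (f j) := ⟨hz, hzj⟩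
    refine hgen j hjM hjg hjv ?_
    simpa using Submodule.add_mem _ (Submodule.mem_sup_left hzgj)
      (Submodule.mem_sup_right (Submodule.smul_mem _ τ (Submodule.mem_span_singleton_self v)))
  have hpos := mul_sub_pos_of_abs_le (hmin j hjM hjv) hτ (div_ne_zero hjx hjv)
  have : f j (x - τ • v) * f j x = f j v ^ 2 * (f j x / f j v * (f j x / f j v - τ)) := by
    simp only [map_sub, map_smul, smul_eq_mul]
    field_simp
  rw [this]
  positivity

theorem finrank_le_card_walls [FiniteDimensional ℝ E] (hess : ∀ v ≠ 0, ∃ i ∈ M, f i v ≠ 0)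
    (hinj : Set.InjOn (fun i => ker (f i)) M) (hS : S ∈ cells f ⊤ M) :
    finrank ℝ E ≤ #{i ∈ M | IsWall f M S i} := by
  by_contra! hlt
  obtain ⟨v, hv0, hvW⟩ := exists_ne_zero_forall_apply_eq_zero f hlt
  set P := {i ∈ M | f i v ≠ 0}
  obtain ⟨x, hxS, hxQ⟩ : ∃ x, (∀ i ∈ M, OnSide f S i x) ∧
      ∀ q ∈ P.offDiag.image fun p => ker (f p.1) ⊓ ker (f p.2) ⊔ ℝ ∙ v, x ∉ q := by
    obtain ⟨-, x₀, -, hx₀⟩ := mem_cells.1 hS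
    refine exists_onSide_forall_notMem ?_ hx₀
    simp only [mem_image, mem_offDiag, not_exists, not_and]
    rintro ⟨i, j⟩ ⟨hi, hj, hij⟩
    rw [mem_filter] at hi hj
    exact inf_ker_sup_span_ne_top hi.2 hj.2 (hinj.ne hi.1 hj.1 hij)
  obtain ⟨g, hgP, hgmin⟩ := P.exists_min_image (fun i => |f i x / f i v|) <| by
    obtain ⟨i, hi, h⟩ := hess v hv0
    exact ⟨i, mem_filter.2 ⟨hi, h⟩⟩
  obtain ⟨hgM, hgv⟩ := mem_filter.1 hgP
  have hwall : IsWall f M S g :=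
    isWall_of_forall_abs_div_le hxS hgv (fun j hj hjv => hgmin j (mem_filter.2 ⟨hj, hjv⟩))
      fun j hj hjg hjv => hxQ _ <| mem_image.2
        ⟨(g, j), mem_offDiag.2 ⟨hgP, mem_filter.2 ⟨hj, hjv⟩, hjg.symm⟩, rfl⟩
  exact hgv (hvW g (mem_filter.2 ⟨hgM, hwall⟩))

end Walls

end HyperplaneArrangement

namespace LineArrangement

open HyperplaneArrangement

local notation "ℝ³" => Fin 3 → ℝ

lemma exists_dual_ker_eq {ℓ : Submodule ℝ ℝ³} (hℓ : IsProjLine ℓ) :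
    ∃ φ : Module.Dual ℝ ℝ³, ker φ = ℓ := by
  have hℓ' : finrank ℝ ℓ = 2 := hℓ
  obtain ⟨φ, hφ, hle⟩ := ℓ.exists_le_ker_of_lt_top <| lt_top_iff_ne_top.2 fun h => by
    subst h
    simp at hℓ'
  have := Module.Dual.finrank_ker_add_one_of_ne_zero hφ
  rw [Module.finrank_fintype_fun_eq_card, Fintype.card_fin] at this
  exact ⟨φ, (Submodule.eq_of_le_of_finrank_eq hle (by omega)).symm⟩

def lineForm (ℓ : Submodule ℝ ℝ³) : Module.Dual ℝ ℝ³ :=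
  if h : ∃ φ : Module.Dual ℝ ℝ³, ker φ = ℓ then h.choose else 0

lemma ker_lineForm {ℓ : Submodule ℝ ℝ³} (hℓ : IsProjLine ℓ) : ker (lineForm ℓ) = ℓ := by
  have h := exists_dual_ker_eq hℓ
  rw [lineForm, dif_pos h, h.choose_spec]

def vertices (L : Finset (Submodule ℝ ℝ³)) : Finset (Submodule ℝ ℝ³) :=
  L.offDiag.image fun q => q.1 ⊓ q.2

def mult (L : Finset (Submodule ℝ ℝ³)) (p : Submodule ℝ ℝ³) : ℕ :=
  #{ℓ ∈ L | p ≤ ℓ}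

lemma lineForm_ne_zero {ℓ : Submodule ℝ ℝ³} (hℓ : IsProjLine ℓ) : lineForm ℓ ≠ 0 := by
  intro h
  have htop := ker_lineForm hℓ
  rw [h, LinearMap.ker_zero] at htop
  subst htop
  simp [IsProjLine] at hℓ

lemma not_le_ker_lineForm {ℓ g : Submodule ℝ ℝ³} (hℓ : IsProjLine ℓ) (hg : IsProjLine g)
    (hne : ℓ ≠ g) : ¬ℓ ≤ ker (lineForm g) := by
  rw [ker_lineForm hg]
  exact fun h => hne (Submodule.eq_of_le_of_finrank_eq h (hℓ.trans hg.symm))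

lemma finrank_inf_eq_one {ℓ g : Submodule ℝ ℝ³} (hℓ : IsProjLine ℓ) (hg : IsProjLine g)
    (hne : ℓ ≠ g) : finrank ℝ ↥(ℓ ⊓ g) = 1 := by
  have := finrank_inf_ker_add_one (not_le_ker_lineForm hℓ hg hne)
  rw [ker_lineForm hg] at this
  have hℓ' : finrank ℝ ℓ = 2 := hℓ
  omega

lemma mult_insert {L : Finset (Submodule ℝ ℝ³)} {ℓ : Submodule ℝ ℝ³} (hℓ : ℓ ∉ L)
    (p : Submodule ℝ ℝ³) : mult (insert ℓ L) p = mult L p + if p ≤ ℓ then 1 else 0 := by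
  unfold mult
  rw [filter_insert]
  split_ifs with h
  · rw [card_insert_of_notMem fun h' => hℓ (mem_filter.1 h').1]
  · rfl

section Lines

variable {L : Finset (Submodule ℝ ℝ³)} (hL : ∀ ℓ ∈ L, IsProjLine ℓ)
include hL

lemma mem_vertices_iff {p : Submodule ℝ ℝ³} :
    p ∈ vertices L ↔ finrank ℝ p = 1 ∧ 2 ≤ mult L p := by
  constructor
  · intro hp
    obtain ⟨⟨a, b⟩, hab, rfl⟩ := mem_image.1 hp
    obtain ⟨ha, hb, hne⟩ := mem_offDiag.1 hab
    refine ⟨finrank_inf_eq_one (hL a ha) (hL b hb) hne, ?_⟩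
    calc 2 = #{a, b} := (card_pair hne).symm
      _ ≤ mult L (a ⊓ b) := card_le_card fun c hc => by
        rcases mem_insert.1 hc with rfl | hc
        · exact mem_filter.2 ⟨ha, inf_le_left⟩
        · exact mem_filter.2 ⟨(mem_singleton.1 hc) ▸ hb, (mem_singleton.1 hc) ▸ inf_le_right⟩
  · rintro ⟨hp, h2⟩
    obtain ⟨a, ha, b, hb, hne⟩ := one_lt_card.1 h2
    rw [mem_filter] at ha hb
    have hab := finrank_inf_eq_one (hL a ha.1) (hL b hb.1) hne
    have : p = a ⊓ b := Submodule.eq_of_le_of_finrank_eq (le_inf ha.2 hb.2) (hp.trans hab.symm)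
    exact mem_image.2 ⟨(a, b), mem_offDiag.2 ⟨ha.1, hb.1, hne⟩, this.symm⟩

lemma filter_vertices_le {ℓ : Submodule ℝ ℝ³} (hℓ : ℓ ∈ L) :
    {p ∈ vertices L | p ≤ ℓ} = (L.erase ℓ).image (ℓ ⊓ ·) := by
  ext p
  simp only [mem_filter, mem_image, mem_erase]
  constructor
  · rintro ⟨hp, hpℓ⟩
    obtain ⟨hp1, hp2⟩ := (mem_vertices_iff hL).1 hp
    obtain ⟨g, hg, hgℓ⟩ := exists_mem_ne hp2 ℓ
    obtain ⟨hgL, hpg⟩ := mem_filter.1 hg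
    refine ⟨g, ⟨hgℓ, hgL⟩, (Submodule.eq_of_le_of_finrank_eq (le_inf hpℓ hpg) ?_).symm⟩
    rw [hp1, finrank_inf_eq_one (hL ℓ hℓ) (hL g hgL) (Ne.symm hgℓ)]
  · rintro ⟨g, ⟨hgℓ, hgL⟩, rfl⟩
    exact ⟨mem_image.2 ⟨(ℓ, g), mem_offDiag.2 ⟨hℓ, hgL, Ne.symm hgℓ⟩, rfl⟩, inf_le_left⟩

end Lines

lemma sum_card_filter_vertices_le (L : Finset (Submodule ℝ ℝ³)) :
    ∑ ℓ ∈ L, #{p ∈ vertices L | p ≤ ℓ} = ∑ p ∈ vertices L, mult L p := by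
  simp only [mult, card_filter]
  exact sum_comm

lemma sum_mult_sub_one_insert {L : Finset (Submodule ℝ ℝ³)} {ℓ : Submodule ℝ ℝ³}
    (hL : ∀ g ∈ insert ℓ L, IsProjLine g) (hℓ : ℓ ∉ L) :
    ∑ p ∈ vertices (insert ℓ L), (mult (insert ℓ L) p - 1) =
      ∑ p ∈ vertices L, (mult L p - 1) + #(L.image (ℓ ⊓ ·)) := by
  have hL' : ∀ g ∈ L, IsProjLine g := fun g hg => hL g (mem_insert_of_mem hg)
  have hsub : vertices L ⊆ vertices (insert ℓ L) :=
    image_subset_image (offDiag_mono (subset_insert ℓ L))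
  have hterm : ∀ p ∈ vertices (insert ℓ L), mult (insert ℓ L) p - 1 =
      (if p ∈ vertices L then mult L p - 1 else 0) + if p ≤ ℓ then 1 else 0 := by
    intro p hp
    obtain ⟨hp1, hp2⟩ := (mem_vertices_iff hL).1 hp
    rw [mult_insert hℓ] at hp2 ⊢
    by_cases hpL : p ∈ vertices L
    · have := ((mem_vertices_iff hL').1 hpL).2
      split_ifs <;> omega
    · have : mult L p < 2 := by
        by_contra h
        exact hpL ((mem_vertices_iff hL').2 ⟨hp1, by omega⟩)
      split_ifs at hp2 ⊢ <;> omega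
  rw [sum_congr rfl hterm, sum_add_distrib, sum_ite_mem, inter_eq_right.2 hsub, sum_boole,
    ← erase_insert hℓ, ← filter_vertices_le hL (mem_insert_self ℓ L), erase_insert hℓ]
  rfl

lemma card_cells_line {L : Finset (Submodule ℝ ℝ³)} {ℓ : Submodule ℝ ℝ³}
    (hL : ∀ g ∈ insert ℓ L, IsProjLine g) (hℓ : ℓ ∉ L) (hne : L.Nonempty) :
    #(cells lineForm ℓ L) = 2 * #(L.image (ℓ ⊓ ·)) := by
  have hℓ' := hL ℓ (mem_insert_self ℓ L)
  have hg : ∀ g ∈ L, IsProjLine g := fun g hg => hL g (mem_insert_of_mem hg)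
  have himage : L.image (fun g => ℓ ⊓ ker (lineForm g)) = L.image (ℓ ⊓ ·) :=
    image_congr fun g hgL => by simp only [ker_lineForm (hg g hgL)]
  rw [card_cells_of_finrank_eq_two hℓ' hne fun g hgL =>
      not_le_ker_lineForm hℓ' (hg g hgL) fun h => hℓ (h ▸ hgL), himage]

theorem card_chambers {L : Finset (Submodule ℝ ℝ³)} (hL : ∀ ℓ ∈ L, IsProjLine ℓ)
    (hne : L.Nonempty) : #(cells lineForm ⊤ L) = 2 + 2 * ∑ p ∈ vertices L, (mult L p - 1) := by
  have htop : ∀ ℓ ∈ L, ¬(⊤ : Submodule ℝ ℝ³) ≤ ker (lineForm ℓ) := fun ℓ hℓ h =>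
    lineForm_ne_zero (hL ℓ hℓ) (LinearMap.ext fun x => h trivial)
  induction hne using Finset.Nonempty.cons_induction with
  | singleton ℓ =>
    rw [← insert_empty_eq, card_cells_insert (notMem_empty ℓ) (htop ℓ (mem_singleton_self ℓ)),
      cells_empty, cells_empty]
    simp [vertices]
  | cons ℓ L hℓ hne ih =>
    rw [cons_eq_insert] at hL htop ⊢
    rw [card_cells_insert hℓ (htop ℓ (mem_insert_self ℓ L)),
      ih (fun g hg => hL g (mem_insert_of_mem hg)) fun g hg => htop g (mem_insert_of_mem hg),
      top_inf_eq, ker_lineForm (hL ℓ (mem_insert_self ℓ L)), card_cells_line hL hℓ hne,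
      sum_mult_sub_one_insert hL hℓ]
    ring

theorem sum_card_walls {L : Finset (Submodule ℝ ℝ³)} (hL : ∀ ℓ ∈ L, IsProjLine ℓ)
    (h2 : 2 ≤ #L) : ∑ S ∈ cells lineForm ⊤ L, #{ℓ ∈ L | IsWall lineForm L S ℓ} =
      4 * ∑ p ∈ vertices L, mult L p := by
  simp only [card_filter]
  rw [sum_comm, ← sum_card_filter_vertices_le, mul_sum]
  refine sum_congr rfl fun ℓ hℓ => ?_
  have hne : (L.erase ℓ).Nonempty := by
    rw [← card_pos, card_erase_of_mem hℓ]
    omega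
  have hL' : ∀ g ∈ insert ℓ (L.erase ℓ), IsProjLine g := by rwa [insert_erase hℓ]
  rw [← card_filter, card_filter_isWall hℓ (lineForm_ne_zero (hL ℓ hℓ)), ker_lineForm (hL ℓ hℓ),
    card_cells_line hL' (notMem_erase ℓ L) hne, filter_vertices_le hL hℓ]
  ring

theorem three_add_sum_mult_le {L : Finset (Submodule ℝ ℝ³)} (hL : ∀ ℓ ∈ L, IsProjLine ℓ)
    (h2 : 2 ≤ #L) (hess : ∀ v ≠ 0, ∃ ℓ ∈ L, v ∉ ℓ) :
    3 + ∑ p ∈ vertices L, mult L p ≤ 3 * #(vertices L) := by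
  have hwalls : ∀ S ∈ cells lineForm ⊤ L, 3 ≤ #{ℓ ∈ L | IsWall lineForm L S ℓ} := by
    intro S hS
    have hess' : ∀ v ≠ 0, ∃ ℓ ∈ L, lineForm ℓ v ≠ 0 := fun v hv => by
      obtain ⟨ℓ, hℓ, hvℓ⟩ := hess v hv
      exact ⟨ℓ, hℓ, fun h => hvℓ (ker_lineForm (hL ℓ hℓ) ▸ LinearMap.mem_ker.2 h)⟩
    have hinj : Set.InjOn (fun ℓ => ker (lineForm ℓ)) L := fun ℓ hℓ g hg h => by
      simpa only [ker_lineForm (hL ℓ hℓ), ker_lineForm (hL g hg)] using h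
    simpa using finrank_le_card_walls hess' hinj hS
  have h3 := card_nsmul_le_sum _ _ 3 hwalls
  rw [sum_card_walls hL h2, card_chambers hL (card_pos.1 (by omega)), smul_eq_mul] at h3
  have hsplit : ∑ p ∈ vertices L, (mult L p - 1) + #(vertices L) = ∑ p ∈ vertices L, mult L p := by
    rw [card_eq_sum_ones, ← sum_add_distrib]
    refine sum_congr rfl fun p hp => Nat.sub_add_cancel ?_
    have := ((mem_vertices_iff hL).1 hp).2
    omega
  omega

lemma multPt_eq_mult (L : Finset (Submodule ℝ ℝ³)) (p : Submodule ℝ ℝ³) :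
    multPt L p = mult L p := by
  rw [multPt, mult, ← Set.ncard_coe_finset]
  congr 1
  ext
  simp

lemma tr_eq_card {L : Finset (Submodule ℝ ℝ³)} (hL : ∀ ℓ ∈ L, IsProjLine ℓ) {r : ℕ}
    (hr : 2 ≤ r) : tr L r = #{p ∈ vertices L | mult L p = r} := by
  rw [tr, ← Set.ncard_coe_finset]
  congr 1
  ext p
  simp only [IsProjPoint, multPt_eq_mult, coe_filter, mem_vertices_iff hL, Set.mem_ofPred_eq]
  constructor
  · rintro ⟨hp, rfl⟩
    exact ⟨⟨hp, hr⟩, rfl⟩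
  · rintro ⟨⟨hp, -⟩, rfl⟩
    exact ⟨hp, rfl⟩

lemma sum_vertices_eq_sum_tr {L : Finset (Submodule ℝ ℝ³)} (hL : ∀ ℓ ∈ L, IsProjLine ℓ)
    {T : Finset ℕ} (hT : ∀ p ∈ vertices L, mult L p ∈ T) (hT2 : ∀ r ∈ T, 2 ≤ r) (φ : ℕ → ℕ) :
    ∑ p ∈ vertices L, φ (mult L p) = ∑ r ∈ T, φ r * tr L r := by
  rw [← sum_fiberwise_of_maps_to hT]
  refine sum_congr rfl fun r hr => ?_
  rw [tr_eq_card hL (hT2 r hr), sum_congr rfl fun p hp => by rw [(mem_filter.1 hp).2], sum_const,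
    smul_eq_mul, mul_comm]

lemma exists_notMem_of_tr_card_eq_zero {L : Finset (Submodule ℝ ℝ³)}
    (hL : ∀ ℓ ∈ L, IsProjLine ℓ) (h2 : 2 ≤ #L) (h : tr L #L = 0) {v : ℝ³} (hv : v ≠ 0) :
    ∃ ℓ ∈ L, v ∉ ℓ := by
  by_contra! hall
  have hmult : mult L (ℝ ∙ v) = #L := by
    rw [mult, filter_true_of_mem fun ℓ hℓ =>
      (Submodule.span_singleton_le_iff_mem _ _).2 (hall ℓ hℓ)]
  have hp : ℝ ∙ v ∈ {p ∈ vertices L | mult L p = #L} :=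
    mem_filter.2 ⟨(mem_vertices_iff hL).2 ⟨finrank_span_singleton hv, hmult ▸ h2⟩, hmult⟩
  rw [tr_eq_card hL h2] at h
  exact notMem_empty _ (card_eq_zero.1 h ▸ hp)

lemma mult_mem_of_tr_card_eq_zero {L : Finset (Submodule ℝ ℝ³)} (hL : ∀ ℓ ∈ L, IsProjLine ℓ)
    (h : tr L #L = 0) {p : Submodule ℝ ℝ³} (hp : p ∈ vertices L) :
    mult L p ∈ insert 2 (insert 3 (Icc 4 (#L - 1))) := by
  have h2 := ((mem_vertices_iff hL).1 hp).2
  have hle : mult L p ≤ #L := card_filter_le _ _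
  have hne : mult L p ≠ #L := fun hmax => by
    rw [tr_eq_card hL (hmax ▸ h2), card_eq_zero] at h
    exact notMem_empty p (h ▸ mem_filter.2 ⟨hp, hmax⟩)
  simp only [mem_insert, mem_Icc]
  omega

end LineArrangement

end

open LineArrangement

/-- **Melchior's inequality.**  For a real arrangement of `d ≥ 3` lines that are
not all concurrent, `t₂ ≥ 3 + Σ_{r=4}^{d−1} (r−3)·t_r`. -/
theorem melchior (L : Finset (Submodule ℝ (Fin 3 → ℝ))) (d : ℕ)
    (hL : ∀ ℓ ∈ L, IsProjLine ℓ) (hcard : L.card = d) (hd : 3 ≤ d)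
    (htd : tr L d = 0) :
    tr L 2 ≥ 3 + ∑ r ∈ Finset.Icc 4 (d - 1), (r - 3) * tr L r := by
  subst hcard
  have key := three_add_sum_mult_le hL (by omega) fun v hv =>
    exists_notMem_of_tr_card_eq_zero hL (by omega) htd hv
  set T := insert 2 (insert 3 (Icc 4 (#L - 1)))
  have hT2 : ∀ r ∈ T, 2 ≤ r := by
    simp only [T, mem_insert, mem_Icc]
    omega
  have hT := fun p (hp : p ∈ vertices L) => mult_mem_of_tr_card_eq_zero hL htd hp
  have hV : #(vertices L) = ∑ r ∈ T, tr L r := by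
    simpa only [one_mul, ← card_eq_sum_ones] using sum_vertices_eq_sum_tr hL hT hT2 fun _ => 1
  have hE : ∑ p ∈ vertices L, mult L p = ∑ r ∈ T, r * tr L r :=
    sum_vertices_eq_sum_tr hL hT hT2 id
  rw [hE, hV] at key
  rw [sum_insert (by simp), sum_insert (by simp), sum_insert (by simp), sum_insert (by simp)] at key
  have hsplit : ∑ r ∈ Icc 4 (#L - 1), r * tr L r =
      ∑ r ∈ Icc 4 (#L - 1), (r - 3) * tr L r + 3 * ∑ r ∈ Icc 4 (#L - 1), tr L r := by
    rw [mul_sum, ← sum_add_distrib]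
    refine sum_congr rfl fun r hr => ?_
    rw [← add_mul, Nat.sub_add_cancel (by have := (mem_Icc.1 hr).1; omega)]
  omega
end
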